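/- There exist a universal constant C₀ ∈ (0,1) and, for each r ≥ 0, a constant c_r > 0 such that for every orthonormal system Φ_N = {φ_j}_{j=1}^N in L₂(Ω,μ) and all integers 0 < v ≤ C₀N and m ≥ 1, one has ϱ^{ls}_{m,v}(A₁^r(Φ_N), Φ_N, L₂(Ω,μ)) ≥ σ_v(A₁^r(Φ_N), Φ_N)₂ ≥ c_r v^{−r−1/2}. -/

import Mathlib

/-!
The first inequality is immediate: a least squares approximant from a span of `v` elements of
`Φ_N` is itself a `v`-term approximant. For the second, take `n = 2v` and the flat function
`f = n^{-r-1} ∑_{j ≤ n} φ_j`, which lies in `A₁^r(Φ_N)` because `∑_{j ≤ n} j^r ≤ n^{r+1}`.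
By Parseval, a `v`-term approximant `g` leaves at least `v` of the `n` equal coefficients of `f`
untouched, so `‖f - g‖₂ ≥ √v n^{-r-1} = 2^{-r-1} v^{-r-1/2}`.
-/

open MeasureTheory

noncomputable section

/-- The `L_2(Ω,μ)` norm `(∫_Ω |f|² dμ)^{1/2}` of a complex-valued function. -/
def l2n {Ω : Type*} [MeasurableSpace Ω] (μ : Measure Ω) (f : Ω → ℂ) : ℝ :=
  (∫ x, ‖f x‖ ^ 2 ∂μ) ^ (1 / 2 : ℝ)

/-- `Σ_v(D_N)`: the set of all `v`-term approximants with respect to the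
dictionary `D_N = {g 0, …, g (N-1)}`. -/
def SparseSet {Ω : Type*} [TopologicalSpace Ω] {N : ℕ} (g : Fin N → C(Ω, ℂ)) (v : ℕ) :
    Set C(Ω, ℂ) :=
  {h | ∃ J : Finset (Fin N), J.card = v ∧ h ∈ Submodule.span ℂ (g '' ↑J)}

/-- The probability measure `μ_ξ = (1/2)μ + (1/(2m)) ∑_j δ_{ξ^j}`. -/
def discMeasure {Ω : Type*} [MeasurableSpace Ω] (μ : Measure Ω) {m : ℕ} (ξ : Fin m → Ω) :
    Measure Ω :=
  (1 / 2 : ENNReal) • μ + (2 * (m : ENNReal))⁻¹ • ∑ j, Measure.dirac (ξ j)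

/-- `u` is a least squares approximant of `f` from the subspace `L` for the points `ξ`:
it minimizes `(1/m) ∑_j ‖f(ξ^j) - u(ξ^j)‖²` over `L`. -/
def IsLSMin {Ω : Type*} [TopologicalSpace Ω] {m : ℕ} (ξ : Fin m → Ω) (f : Ω → ℂ)
    (L : Submodule ℂ C(Ω, ℂ)) (u : C(Ω, ℂ)) : Prop :=
  u ∈ L ∧ ∀ u' ∈ L,
    (1 / (m : ℝ)) * ∑ j, ‖f (ξ j) - u (ξ j)‖ ^ 2 ≤
      (1 / (m : ℝ)) * ∑ j, ‖f (ξ j) - u' (ξ j)‖ ^ 2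

/-- The points `ξ` provide one-sided universal discretization with constant `C₁`
for all functions in `S`: `C₁‖f‖₂² ≤ (1/m) ∑_j |f(ξ^j)|²`. -/
def OneSidedUD {Ω : Type*} [TopologicalSpace Ω] [MeasurableSpace Ω] (μ : Measure Ω)
    {m : ℕ} (ξ : Fin m → Ω) (C₁ : ℝ) (S : Set C(Ω, ℂ)) : Prop :=
  ∀ f ∈ S, C₁ * (l2n μ ⇑f) ^ 2 ≤ (1 / (m : ℝ)) * ∑ j, ‖f (ξ j)‖ ^ 2

/-- The class `A₁^r(Φ_N) = { ∑_j c_j φ_j : ∑_j |c_j| j^r ≤ 1 }` (indices `j = 1,…,N`). -/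
def A1r {Ω : Type*} [TopologicalSpace Ω] {N : ℕ} (φ : Fin N → C(Ω, ℂ)) (r : ℝ) :
    Set C(Ω, ℂ) :=
  {h | ∃ c : Fin N → ℂ, h = ∑ j, c j • φ j ∧ ∑ j, ‖c j‖ * ((j : ℕ) + 1 : ℝ) ^ r ≤ 1}

open Finset ComplexConjugate

def IsOrthonormalSystem {Ω : Type*} [TopologicalSpace Ω] [MeasurableSpace Ω] (μ : Measure Ω)
    {N : ℕ} (φ : Fin N → C(Ω, ℂ)) : Prop :=
  ∀ i j, ∫ x, φ i x * conj (φ j x) ∂μ = if i = j then 1 else 0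

theorem exists_eq_sum_smul_of_mem_span_image {R M ι : Type*} [Semiring R] [AddCommMonoid M]
    [Module R M] [Fintype ι] {g : ι → M} {J : Finset ι} {x : M}
    (hx : x ∈ Submodule.span R (g '' ↑J)) :
    ∃ b : ι → R, (∀ j ∉ J, b j = 0) ∧ x = ∑ j, b j • g j := by
  obtain ⟨l, hl, rfl⟩ := (Finsupp.mem_span_image_iff_linearCombination R).mp hx
  exact ⟨l, (Finsupp.mem_supported' R l).mp hl, by
    rw [Finsupp.linearCombination_apply, Finsupp.sum_fintype _ _ fun i => zero_smul R (g i)]⟩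

theorem card_sdiff_mul_sq_le_sum_norm_sub_sq {ι E : Type*} [Fintype ι] [DecidableEq ι]
    [SeminormedAddCommGroup E] {T J : Finset ι} {c b : ι → E} {a : ℝ}
    (hc : ∀ j ∈ T, ‖c j‖ = a) (hb : ∀ j ∉ J, b j = 0) :
    (#(T \ J) : ℝ) * a ^ 2 ≤ ∑ j, ‖c j - b j‖ ^ 2 :=
  calc (#(T \ J) : ℝ) * a ^ 2 = ∑ j ∈ T \ J, ‖c j - b j‖ ^ 2 := by
        rw [← nsmul_eq_mul, ← sum_const]
        refine sum_congr rfl fun j hj => ?_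
        rw [mem_sdiff] at hj
        rw [hb j hj.2, sub_zero, hc j hj.1]
    _ ≤ ∑ j, ‖c j - b j‖ ^ 2 :=
        sum_le_sum_of_subset_of_nonneg (subset_univ _) fun _ _ _ => by positivity

section SupInf

variable {α β : Type*} {D : α → β → ℝ}

theorem bddAbove_range_ciInf_of_le (hD : ∀ a b, 0 ≤ D a b) (b₀ : β) {C : ℝ}
    (hC : ∀ a, D a b₀ ≤ C) : BddAbove (Set.range fun a => ⨅ b, D a b) :=
  ⟨C, by
    rintro _ ⟨a, rfl⟩
    exact (ciInf_le ⟨0, by rintro _ ⟨b, rfl⟩; exact hD a b⟩ b₀).trans (hC a)⟩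

theorem exists_forall_ciSup_ciInf_sub_le [Nonempty α] (hD : ∀ a b, 0 ≤ D a b) {ε : ℝ}
    (hε : 0 < ε) :
    ∃ a, ∀ b, (⨆ a, ⨅ b, D a b) - ε ≤ D a b := by
  obtain ⟨a, ha⟩ := exists_lt_of_lt_ciSup (sub_lt_self (⨆ a, ⨅ b, D a b) hε)
  exact ⟨a, fun b => ha.le.trans (ciInf_le ⟨0, by rintro _ ⟨b, rfl⟩; exact hD a b⟩ b)⟩

end SupInf

theorem l2n_nonneg {Ω : Type*} [MeasurableSpace Ω] (μ : Measure Ω) (f : Ω → ℂ) : 0 ≤ l2n μ f :=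
  Real.rpow_nonneg (integral_nonneg fun _ => by positivity) _

section SparseSystem

variable {Ω : Type*} [TopologicalSpace Ω] {N : ℕ} {φ : Fin N → C(Ω, ℂ)}

theorem zero_mem_A1r (r : ℝ) : (0 : C(Ω, ℂ)) ∈ A1r φ r :=
  ⟨0, by ext; simp, by simp⟩

theorem zero_mem_sparseSet {v : ℕ} (hv : v ≤ N) : (0 : C(Ω, ℂ)) ∈ SparseSet φ v := by
  obtain ⟨J, -, hJ⟩ := exists_subset_card_eq (s := (univ : Finset (Fin N))) (by simpa using hv)
  exact ⟨J, hJ, Submodule.zero_mem _⟩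

def flatCoeff (N n : ℕ) (r : ℝ) (j : Fin N) : ℂ :=
  if (j : ℕ) < n then (((n : ℝ) ^ (-(r + 1)) : ℝ) : ℂ) else 0

theorem norm_flatCoeff_of_lt {n : ℕ} (r : ℝ) {j : Fin N} (hj : (j : ℕ) < n) :
    ‖flatCoeff N n r j‖ = (n : ℝ) ^ (-(r + 1)) := by
  rw [flatCoeff, if_pos hj, Complex.norm_real, Real.norm_of_nonneg (by positivity)]

theorem sum_smul_flatCoeff_mem_A1r {n : ℕ} (hn : 0 < n) {r : ℝ} (hr : 0 ≤ r) :
    ∑ j, flatCoeff N n r j • φ j ∈ A1r φ r := by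
  refine ⟨flatCoeff N n r, rfl, ?_⟩
  have hterm : ∀ j : Fin N, ‖flatCoeff N n r j‖ * ((j : ℕ) + 1 : ℝ) ^ r ≤
      if (j : ℕ) < n then (n : ℝ) ^ (-(r + 1)) * (n : ℝ) ^ r else 0 := by
    intro j
    split_ifs with hj
    · rw [norm_flatCoeff_of_lt r hj]
      gcongr
      exact_mod_cast hj
    · simp [flatCoeff, hj]
  calc ∑ j, ‖flatCoeff N n r j‖ * ((j : ℕ) + 1 : ℝ) ^ r
      ≤ ∑ j : Fin N, if (j : ℕ) < n then (n : ℝ) ^ (-(r + 1)) * (n : ℝ) ^ r else 0 :=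
        sum_le_sum fun j _ => hterm j
    _ = (min N n : ℕ) * ((n : ℝ) ^ (-(r + 1)) * (n : ℝ) ^ r) := by
        rw [sum_ite, sum_const_zero, add_zero, sum_const, Fin.card_filter_val_lt, nsmul_eq_mul]
    _ ≤ n * ((n : ℝ) ^ (-(r + 1)) * (n : ℝ) ^ r) := by
        gcongr
        exact_mod_cast min_le_right N n
    _ = 1 := by
        have hn' : (0 : ℝ) < n := by exact_mod_cast hn
        rw [← Real.rpow_add hn', show -(r + 1) + r = -1 by ring, Real.rpow_neg_one,
          mul_inv_cancel₀ hn'.ne']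

end SparseSystem

section Orthonormal

variable {Ω : Type*} [TopologicalSpace Ω] [MeasurableSpace Ω] {μ : Measure Ω} {N : ℕ}
  {φ : Fin N → C(Ω, ℂ)}

theorem integral_norm_sq_sum_smul [CompactSpace Ω] [OpensMeasurableSpace Ω] [IsFiniteMeasure μ]
    (hφ : IsOrthonormalSystem μ φ) (c : Fin N → ℂ) :
    ∫ x, ‖(∑ j, c j • φ j) x‖ ^ 2 ∂μ = ∑ j, ‖c j‖ ^ 2 := by
  have hint : ∀ i j, Integrable (fun x => φ i x * conj (φ j x)) μ := fun i j =>
    (by fun_prop : Continuous _).integrable_of_hasCompactSupport (.of_compactSpace _)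
  suffices ((∫ x, ‖(∑ j, c j • φ j) x‖ ^ 2 ∂μ : ℝ) : ℂ) = ((∑ j, ‖c j‖ ^ 2 : ℝ) : ℂ) from
    mod_cast this
  calc _ = ∫ x, ∑ i, ∑ j, c i * conj (c j) * (φ i x * conj (φ j x)) ∂μ := by
        rw [← integral_complex_ofReal]
        congr with x
        simp only [Complex.ofReal_pow, ← Complex.mul_conj', ContinuousMap.sum_apply,
          ContinuousMap.smul_apply, smul_eq_mul, map_sum, map_mul, sum_mul_sum]
        exact sum_congr rfl fun i _ => sum_congr rfl fun j _ => by ring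
    _ = ∑ i, ∑ j, c i * conj (c j) * ∫ x, φ i x * conj (φ j x) ∂μ := by
        rw [integral_finsetSum _ fun i _ => integrable_finsetSum _ fun j _ =>
          (hint i j).const_mul _]
        refine sum_congr rfl fun i _ => ?_
        rw [integral_finsetSum _ fun j _ => (hint i j).const_mul _]
        simp only [integral_const_mul]
    _ = ∑ j, c j * conj (c j) := by simp [hφ _ _]
    _ = _ := by push_cast; simp [Complex.mul_conj']

theorem l2n_sum_smul [CompactSpace Ω] [OpensMeasurableSpace Ω] [IsFiniteMeasure μ]
    (hφ : IsOrthonormalSystem μ φ) (c : Fin N → ℂ) :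
    l2n μ ⇑(∑ j, c j • φ j) = √(∑ j, ‖c j‖ ^ 2) := by
  rw [l2n, integral_norm_sq_sum_smul hφ, Real.sqrt_eq_rpow]

theorem l2n_le_one_of_mem_A1r [CompactSpace Ω] [OpensMeasurableSpace Ω] [IsFiniteMeasure μ]
    (hφ : IsOrthonormalSystem μ φ) {r : ℝ} (hr : 0 ≤ r) {f : C(Ω, ℂ)} (hf : f ∈ A1r φ r) :
    l2n μ f ≤ 1 := by
  obtain ⟨c, rfl, hc⟩ := hf
  have hsum : ∑ j, ‖c j‖ ≤ 1 := (sum_le_sum fun j _ =>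
    le_mul_of_one_le_right (norm_nonneg _) (Real.one_le_rpow (by linarith) hr)).trans hc
  have hle : ∀ j, ‖c j‖ ≤ 1 := fun j =>
    (single_le_sum (fun i _ => norm_nonneg (c i)) (mem_univ j)).trans hsum
  rw [l2n_sum_smul hφ, Real.sqrt_le_one]
  calc ∑ j, ‖c j‖ ^ 2 ≤ ∑ j, ‖c j‖ :=
        sum_le_sum fun j _ => pow_le_of_le_one (norm_nonneg _) (hle j) two_ne_zero
    _ ≤ 1 := hsum

theorem sqrt_mul_rpow_le_l2n_sub [CompactSpace Ω] [OpensMeasurableSpace Ω] [IsFiniteMeasure μ]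
    (hφ : IsOrthonormalSystem μ φ) (r : ℝ) {v : ℕ} (hv : 2 * v ≤ N) {g : C(Ω, ℂ)}
    (hg : g ∈ SparseSet φ v) :
    √v * ((2 * v : ℕ) : ℝ) ^ (-(r + 1)) ≤
      l2n μ ⇑(∑ j, flatCoeff N (2 * v) r j • φ j - g) := by
  obtain ⟨J, hJ, hgJ⟩ := hg
  obtain ⟨b, hb, rfl⟩ := exists_eq_sum_smul_of_mem_span_image hgJ
  set T : Finset (Fin N) := {j | (j : ℕ) < 2 * v}
  have hT : #T = 2 * v := by rw [Fin.card_filter_val_lt, min_eq_right hv]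
  have hcard : v ≤ #(T \ J) := by
    have := le_card_sdiff J T
    omega
  rw [← sum_sub_distrib]
  simp only [← sub_smul]
  rw [l2n_sum_smul hφ, ← Real.sqrt_sq (by positivity : (0 : ℝ) ≤ ((2 * v : ℕ) : ℝ) ^ (-(r + 1))),
    ← Real.sqrt_mul (Nat.cast_nonneg _)]
  refine Real.sqrt_le_sqrt ((mul_le_mul_of_nonneg_right (Nat.cast_le.mpr hcard)
    (sq_nonneg _)).trans ?_)
  exact card_sdiff_mul_sq_le_sum_norm_sub_sq
    (fun j hj => norm_flatCoeff_of_lt r (by simpa [T] using hj)) hb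

end Orthonormal

theorem sqrt_mul_two_mul_rpow_eq {x : ℝ} (hx : 0 < x) (r : ℝ) :
    √x * (2 * x) ^ (-(r + 1)) = 2 ^ (-r - 1) * x ^ (-r - 1 / 2) := by
  rw [Real.sqrt_eq_rpow, Real.mul_rpow (by norm_num) hx.le, mul_left_comm, ← Real.rpow_add hx]
  congr 2 <;> ring

/-- The inequality `ϱ^{ls}_{m,v} ≥ σ_v(A₁^r(Φ_N),Φ_N)₂` is
rendered as: for every collection of points `ξ ∈ Ω^m` and every `ε > 0` there is
`f ∈ A₁^r(Φ_N)` such that every `v`-element subspace `L ∈ X_v(Φ_N)` and every least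
squares approximant `u = LS(ξ,L)(f)` satisfy `σ_v(A₁^r(Φ_N),Φ_N)₂ - ε ≤ ‖f - u‖₂`. -/
theorem stmt7 :
    ∃ C₀ : ℝ, 0 < C₀ ∧ C₀ < 1 ∧
      ∀ r : ℝ, 0 ≤ r → ∃ c : ℝ, 0 < c ∧
        ∀ (d : ℕ) (Ω : Set (Fin d → ℝ)) [CompactSpace Ω] (μ : Measure Ω)
          [IsProbabilityMeasure μ] (N : ℕ) (φ : Fin N → C(Ω, ℂ)),
          (∀ i j : Fin N,
            (∫ x, φ i x * (starRingEnd ℂ) (φ j x) ∂μ) = if i = j then 1 else 0) →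
          ∀ v m : ℕ, 0 < v → (v : ℝ) ≤ C₀ * N → 1 ≤ m →
            (∀ ξ : Fin m → Ω, ∀ ε : ℝ, 0 < ε →
              ∃ f ∈ A1r φ r, ∀ J : Finset (Fin N), J.card = v →
                ∀ u : C(Ω, ℂ), IsLSMin ξ ⇑f (Submodule.span ℂ (φ '' ↑J)) u →
                  (⨆ f' : A1r φ r, ⨅ h : SparseSet φ v,
                      l2n μ ⇑((f' : C(Ω, ℂ)) - (h : C(Ω, ℂ)))) - ε ≤
                    l2n μ ⇑(f - u)) ∧
            c * (v : ℝ) ^ (-r - 1 / 2 : ℝ) ≤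
              ⨆ f' : A1r φ r, ⨅ h : SparseSet φ v,
                l2n μ ⇑((f' : C(Ω, ℂ)) - (h : C(Ω, ℂ))) := by
  refine ⟨1 / 2, by norm_num, by norm_num, fun r hr => ⟨2 ^ (-r - 1), by positivity, ?_⟩⟩
  intro d Ω _ μ _ N φ hφ v m hv hvN _
  have h2v : 2 * v ≤ N := by
    have : (2 * v : ℝ) ≤ N := by linarith
    exact_mod_cast this
  have hD : ∀ (f : A1r φ r) (h : SparseSet φ v), 0 ≤ l2n μ ⇑((f : C(Ω, ℂ)) - h) :=
    fun _ _ => l2n_nonneg _ _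
  have h0 : (0 : C(Ω, ℂ)) ∈ SparseSet φ v := zero_mem_sparseSet (by omega)
  have : Nonempty (A1r φ r) := ⟨⟨0, zero_mem_A1r r⟩⟩
  have : Nonempty (SparseSet φ v) := ⟨⟨0, h0⟩⟩
  have hbdd := bddAbove_range_ciInf_of_le hD ⟨0, h0⟩ (C := 1)
    fun f => by simpa using l2n_le_one_of_mem_A1r hφ hr f.2
  refine ⟨fun ξ ε hε => ?_, ?_⟩
  · obtain ⟨f, hf⟩ := exists_forall_ciSup_ciInf_sub_le hD hε
    exact ⟨f, f.2, fun J hJ u hu => hf ⟨u, J, hJ, hu.1⟩⟩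
  · have hv' : (0 : ℝ) < v := by exact_mod_cast hv
    calc 2 ^ (-r - 1) * (v : ℝ) ^ (-r - 1 / 2) = √v * ((2 * v : ℕ) : ℝ) ^ (-(r + 1)) := by
          rw [Nat.cast_mul, Nat.cast_ofNat, sqrt_mul_two_mul_rpow_eq hv']
      _ ≤ ⨅ h : SparseSet φ v, l2n μ ⇑(∑ j, flatCoeff N (2 * v) r j • φ j - h) :=
          le_ciInf fun h => sqrt_mul_rpow_le_l2n_sub hφ r h2v h.2
      _ ≤ _ := le_ciSup hbdd ⟨_, sum_smul_flatCoeff_mem_A1r (by omega) hr⟩
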